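/- arXiv:0803.2601 — 2 statements merged into one kernel-verified Lean document; each statement's English description precedes it below -/
import Mathlib

section
/- Let A, B and T be finite subsets of an abelian group G with |A| ≥ |B| ≥ k ≥ 1 and |A| ≥ |T|, and let t ≥ 1. If r_{A,−B}(x) ≤ k for all x ∈ G \ T, then ∑_{i=1}^{t} |A +_i B| ≥ t·min{ |A||B| / (t + √(t(t−1))), |A|²|B| / (|T|(|B|−k) + k|A|) }, and in particular ∑_{i=1}^{t} |A +_i B| ≥ min{ |A||B|/2, t·|A|²|B| / (|T|(|B|−k) + k|A|) }. -/
/-!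
Write `r g` for the number of representations `g = a + b`, so that `∑ r g = |A| |B| = N` and
`∑_{i ≤ t} |A +_i B| = ∑ min (r g) t = S`. The additive energy `∑ r g ^ 2` of `(A, B)` equals that
of `(A, -B)`, which the hypothesis on `r_{A,-B}` bounds by `E = |B| (|T| (|B| - k) + k |A|)`.
For `y ≥ c = t + √(t(t-1))`, the larger root of `y² - 2ty + t`, every natural `r` satisfies
`2tyr ≤ y² min r t + t r²`; summing gives `2tyN ≤ y² S + tE`, and the choice `y = max c (E / N)`
yields `t min (N / c) (N² / E) ≤ S`.
-/

open scoped Pointwise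

variable {G : Type*} [AddCommGroup G] [DecidableEq G]

/-- `rep A B g` is the number of representations of `g` as `a + b` with `a ∈ A`, `b ∈ B`. -/
def rep (A B : Finset G) (g : G) : ℕ :=
  ((A ×ˢ B).filter (fun p => p.1 + p.2 = g)).card

/-- `repSum A B i` is the set `A +_i B` of elements having at least `i` representations. -/
def repSum (A B : Finset G) (i : ℕ) : Finset G :=
  (A + B).filter (fun g => i ≤ rep A B g)

open Finset
open scoped Combinatorics.Additive

lemma sum_rep (A B : Finset G) : ∑ g ∈ A + B, rep A B g = #A * #B := by
  rw [← card_product, card_eq_sum_card_fiberwise (f := fun p : G × G => p.1 + p.2)]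
  · rfl
  · intro p hp
    rw [coe_product, Set.mem_prod] at hp
    exact add_mem_add hp.1 hp.2

lemma sum_rep_sq (A B : Finset G) : ∑ g ∈ A + B, rep A B g ^ 2 = E[A, B] :=
  (addEnergy_eq_sum_sq' A B).symm

lemma Finset.addEnergy_neg_right (A B : Finset G) : E[A, -B] = E[A, B] := by
  refine card_nbij' (fun x => (x.1, -x.2.2, -x.2.1)) (fun x => (x.1, -x.2.2, -x.2.1)) ?_ ?_
    (by simp [Set.LeftInvOn]) (by simp [Set.LeftInvOn])
  all_goals
    intro x hx
    simp only [coe_filter, Set.mem_ofPred_eq, mem_product, mem_neg', neg_neg] at hx ⊢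
    simp only [← sub_eq_add_neg, sub_eq_sub_iff_add_eq_add] at hx ⊢
    exact ⟨⟨hx.1.1, hx.1.2.2, hx.1.2.1⟩, hx.2⟩

lemma sum_card_repSum (A B : Finset G) (t : ℕ) :
    ∑ i ∈ Icc 1 t, #(repSum A B i) = ∑ g ∈ A + B, min (rep A B g) t := by
  simp only [repSum, card_filter]
  rw [sum_comm]
  refine sum_congr rfl fun g _ => ?_
  rw [← card_filter, ← Nat.add_sub_cancel (min (rep A B g) t) 1, ← Nat.card_Icc]
  congr 1
  ext i
  simp only [mem_filter, mem_Icc]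
  omega

lemma sum_sq_le_of_le_of_le_off {ι : Type*} [DecidableEq ι] (s T : Finset ι) (f : ι → ℝ)
    {b k : ℝ} (hf : ∀ x, 0 ≤ f x) (hb : ∀ x, f x ≤ b) (hk : ∀ x ∉ T, f x ≤ k) (hkb : k ≤ b)
    (hk0 : 0 ≤ k) :
    ∑ x ∈ s, f x ^ 2 ≤ k * ∑ x ∈ s, f x + (b - k) * b * #T := by
  have hpoint : ∀ x ∈ s, f x ^ 2 ≤ k * f x + if x ∈ T then (b - k) * b else 0 := by
    intro x _
    split_ifs with hx
    · nlinarith [hf x, hb x]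
    · nlinarith [hf x, hk x hx]
  calc ∑ x ∈ s, f x ^ 2
      ≤ ∑ x ∈ s, (k * f x + if x ∈ T then (b - k) * b else 0) := sum_le_sum hpoint
    _ = k * ∑ x ∈ s, f x + (b - k) * b * #(s ∩ T) := by
        rw [sum_add_distrib, ← mul_sum, sum_ite_mem, sum_const, nsmul_eq_mul,
          mul_comm (#(s ∩ T) : ℝ)]
    _ ≤ k * ∑ x ∈ s, f x + (b - k) * b * #T := by
        gcongr
        · nlinarith
        · exact inter_subset_right

lemma sum_rep_sq_le (A B T : Finset G) (k : ℕ) (hBk : k ≤ #B)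
    (hrep : ∀ x : G, x ∉ T → rep A (-B) x ≤ k) :
    ∑ g ∈ A + B, (rep A B g : ℝ) ^ 2 ≤ #B * (#T * (#B - k) + k * #A) := by
  have hE : ∑ g ∈ A + B, (rep A B g : ℝ) ^ 2 = ∑ x ∈ A + -B, (rep A (-B) x : ℝ) ^ 2 := by
    exact_mod_cast (sum_rep_sq A B).trans ((addEnergy_neg_right A B).symm.trans
      (sum_rep_sq A (-B)).symm)
  have hN : ∑ x ∈ A + -B, (rep A (-B) x : ℝ) = #A * #B := by
    exact_mod_cast (sum_rep A (-B)).trans (by rw [card_neg])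
  have hle : ∀ x, (rep A (-B) x : ℝ) ≤ #B := fun x => by
    exact_mod_cast card_neg B ▸ addConvolution_le_card_right
  calc ∑ g ∈ A + B, (rep A B g : ℝ) ^ 2
      = ∑ x ∈ A + -B, (rep A (-B) x : ℝ) ^ 2 := hE
    _ ≤ k * ∑ x ∈ A + -B, (rep A (-B) x : ℝ) + (#B - k) * #B * #T :=
        sum_sq_le_of_le_of_le_off _ T _ (fun _ => Nat.cast_nonneg _) hle
          (fun x hx => by exact_mod_cast hrep x hx) (by exact_mod_cast hBk) (Nat.cast_nonneg k)
    _ = #B * (#T * (#B - k) + k * #A) := by rw [hN]; ring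

lemma two_mul_mul_mul_le_sq_mul_min_add (t r : ℕ) {y : ℝ} (hy : t + √(t * (t - 1)) ≤ y) :
    2 * t * y * r ≤ y ^ 2 * min (r : ℝ) t + t * r ^ 2 := by
  have hty : (t : ℝ) ≤ y := le_trans (le_add_of_nonneg_right (Real.sqrt_nonneg _)) hy
  rcases le_total (t : ℝ) r with htr | hrt
  · rw [min_eq_right htr]
    nlinarith [mul_nonneg (Nat.cast_nonneg t) (sq_nonneg (y - r))]
  · rw [min_eq_left hrt]
    rcases Nat.eq_zero_or_pos r with rfl | hr
    · simp
    have hr : (1 : ℝ) ≤ r := by exact_mod_cast hr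
    have hquad : 0 ≤ y ^ 2 - 2 * t * y + t := by
      have ht : (1 : ℝ) ≤ t := hr.trans hrt
      have hsq : √(t * (t - 1)) ^ 2 = t * (t - 1) := Real.sq_sqrt (by nlinarith)
      nlinarith [Real.sqrt_nonneg (t * (t - 1))]
    nlinarith [mul_nonneg (by linarith : (0 : ℝ) ≤ r) hquad,
      mul_nonneg (mul_nonneg (Nat.cast_nonneg t) (by linarith : (0 : ℝ) ≤ r)) (sub_nonneg.2 hr)]

lemma mul_min_div_le_of_forall_le {t N E S c : ℝ} (ht : 0 ≤ t) (hN : 0 ≤ N) (hS : 0 ≤ S)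
    (hc : 0 ≤ c) (h : ∀ y, c ≤ y → 2 * t * y * N ≤ y ^ 2 * S + t * E) :
    t * min (N / c) (N ^ 2 / E) ≤ S := by
  rcases le_or_gt E (c * N) with hE | hE
  · refine (mul_le_mul_of_nonneg_left (min_le_left _ _) ht).trans ?_
    rcases hc.eq_or_lt with rfl | hc
    · simpa using hS
    have := h c le_rfl
    rw [mul_div_assoc', div_le_iff₀ hc]
    nlinarith [mul_le_mul_of_nonneg_left hE ht]
  · refine (mul_le_mul_of_nonneg_left (min_le_right _ _) ht).trans ?_
    rcases hN.eq_or_lt with rfl | hN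
    · simpa using hS
    have hE0 : 0 < E := by nlinarith [mul_nonneg hc hN.le]
    have := h (E / N) ((le_div_iff₀ hN).2 hE.le)
    rw [mul_div_assoc', div_le_iff₀ hE0]
    field_simp at this
    nlinarith

lemma min_half_le_mul_min (t : ℕ) {a : ℝ} (ha : 0 ≤ a) (X : ℝ) :
    min (a / 2) (t * X) ≤ t * min (a / (t + √(t * (t - 1)))) X := by
  rw [mul_min_of_nonneg _ _ (Nat.cast_nonneg t)]
  rcases Nat.eq_zero_or_pos t with rfl | ht
  · simp
  refine min_le_min_right _ ?_
  have ht : (0 : ℝ) < t := by exact_mod_cast ht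
  have hsqrt : √(t * (t - 1)) ≤ t := Real.sqrt_le_iff.2 ⟨ht.le, by nlinarith⟩
  rw [mul_div_assoc', le_div_iff₀ (by positivity)]
  nlinarith

theorem lemma_AB_large_from_A_minus_B_general (A B T : Finset G) (k t : ℕ) (hBk : k ≤ B.card)
    (hrep : ∀ x : G, x ∉ T → rep A (-B) x ≤ k) :
    ((t : ℝ) * min ((A.card * B.card : ℝ) / (t + Real.sqrt (t * (t - 1))))
        ((A.card ^ 2 * B.card : ℝ) / (T.card * (B.card - k) + k * A.card)) ≤
      ∑ i ∈ Finset.Icc 1 t, ((repSum A B i).card : ℝ)) ∧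
    (min ((A.card * B.card : ℝ) / 2)
        ((t : ℝ) * ((A.card ^ 2 * B.card : ℝ) / (T.card * (B.card - k) + k * A.card))) ≤
      ∑ i ∈ Finset.Icc 1 t, ((repSum A B i).card : ℝ)) := by
  have hS : ∑ i ∈ Icc 1 t, (#(repSum A B i) : ℝ) = ∑ g ∈ A + B, min (rep A B g : ℝ) t := by
    exact_mod_cast sum_card_repSum A B t
  have hN : ∑ g ∈ A + B, (rep A B g : ℝ) = #A * #B := by exact_mod_cast sum_rep A B
  have hsum : ∀ y : ℝ, t + √(t * (t - 1)) ≤ y →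
      2 * t * y * (#A * #B) ≤ y ^ 2 * ∑ i ∈ Icc 1 t, (#(repSum A B i) : ℝ) +
        t * (#B * (#T * (#B - k) + k * #A)) := fun y hy =>
    calc 2 * t * y * (#A * #B)
        = ∑ g ∈ A + B, 2 * t * y * (rep A B g : ℝ) := by rw [← mul_sum, hN]
      _ ≤ ∑ g ∈ A + B, (y ^ 2 * min (rep A B g : ℝ) t + t * (rep A B g : ℝ) ^ 2) :=
          sum_le_sum fun g _ => two_mul_mul_mul_le_sq_mul_min_add t _ hy
      _ = y ^ 2 * ∑ g ∈ A + B, min (rep A B g : ℝ) t +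
            t * ∑ g ∈ A + B, (rep A B g : ℝ) ^ 2 := by
          rw [sum_add_distrib, ← mul_sum, ← mul_sum]
      _ ≤ _ := by rw [hS]; gcongr; exact sum_rep_sq_le A B T k hBk hrep
  have hmain := mul_min_div_le_of_forall_le (Nat.cast_nonneg t) (by positivity)
    (sum_nonneg fun _ _ => Nat.cast_nonneg _) (by positivity) hsum
  have hquot : ((#A : ℝ) * #B) ^ 2 / (#B * (#T * (#B - k) + k * #A)) =
      #A ^ 2 * #B / (#T * (#B - k) + k * #A) := by
    rcases eq_or_ne (#B : ℝ) 0 with hB | hB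
    · simp [hB]
    · field_simp
  rw [hquot] at hmain
  exact ⟨hmain, (min_half_le_mul_min t (by positivity) _).trans hmain⟩

theorem lemma_AB_large_from_A_minus_B (A B T : Finset G) (k t : ℕ) (hk : 1 ≤ k)
    (hBk : k ≤ B.card) (hAB : B.card ≤ A.card) (hAT : T.card ≤ A.card) (ht : 1 ≤ t)
    (hrep : ∀ x : G, x ∉ T → rep A (-B) x ≤ k) :
    ((t : ℝ) * min ((A.card * B.card : ℝ) / (t + Real.sqrt (t * (t - 1))))
        ((A.card ^ 2 * B.card : ℝ) / (T.card * (B.card - k) + k * A.card)) ≤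
      ∑ i ∈ Finset.Icc 1 t, ((repSum A B i).card : ℝ)) ∧
    (min ((A.card * B.card : ℝ) / 2)
        ((t : ℝ) * ((A.card ^ 2 * B.card : ℝ) / (T.card * (B.card - k) + k * A.card))) ≤
      ∑ i ∈ Finset.Icc 1 t, ((repSum A B i).card : ℝ)) :=
  lemma_AB_large_from_A_minus_B_general A B T k t hBk hrep
end

section
/- Let G be an abelian group, let A, B ⊆ G be finite and nonempty, and let k ≥ 1. If |A + B| ≤ |A| + |B| − k, then r_{A,B}(x) ≥ k for all x ∈ A + B. -/
/-!
A Scherk-type inequality: every `x ∈ A + B` satisfies `|A| + |B| ≤ |A + B| + r_{A,B}(x)`.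
If every `b ∈ B` takes part in a representation of `x`, then `r_{A,B}(x) = |B|` and this is
`|A| ≤ |A + B|`. Otherwise a Dyson e-transform `(A ∪ (e + B), B ∩ (A - e))`, with `e` chosen so
that the new `B` keeps a summand `b₀` of some representation `x = a₀ + b₀` but loses a summand
`b₁` of no representation, strictly shrinks `B`, keeps `|A| + |B|` and `x ∈ A + B`, and does not
increase `A + B` or `r_{A,B}(x)`; induct on `B`.
-/

open scoped Pointwise

variable {G : Type*} [AddCommGroup G] [DecidableEq G]

open Finset

lemma rep_eq_card_filter (A B : Finset G) (x : G) : rep A B x = #{b ∈ B | x - b ∈ A} := by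
  unfold rep
  refine card_nbij' Prod.snd (fun b => (x - b, b)) ?_ ?_ ?_ ?_
  · rintro ⟨a, b⟩ h
    simp only [coe_filter, mem_product, Set.mem_ofPred_eq] at h ⊢
    exact ⟨h.1.2, by rw [← h.2, add_sub_cancel_right]; exact h.1.1⟩
  · intro b h
    simp only [coe_filter, Set.mem_ofPred_eq, mem_product] at h ⊢
    exact ⟨⟨h.2, h.1⟩, sub_add_cancel x b⟩
  · rintro ⟨a, b⟩ h
    simp only [coe_filter, mem_product, Set.mem_ofPred_eq] at h
    simp [← h.2]
  · intro b _
    rfl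

lemma vadd_finset_eq_of_subset {A : Finset G} {d : G} (h : d +ᵥ A ⊆ A) : d +ᵥ A = A :=
  eq_of_subset_of_card_le h (card_vadd_finset d A).ge

lemma exists_add_notMem_of_sub_notMem {A : Finset G} {a d : G} (ha : a ∈ A) (had : a - d ∉ A) :
    ∃ c ∈ A, c + d ∉ A := by
  by_contra! hclosed
  have hsub : d +ᵥ A ⊆ A := by
    rintro _ hy
    obtain ⟨c, hc, rfl⟩ := mem_vadd_finset.mp hy
    simpa [add_comm] using hclosed c hc
  rw [← vadd_finset_eq_of_subset hsub, mem_vadd_finset] at ha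
  obtain ⟨c, hc, rfl⟩ := ha
  exact had (by simpa using hc)

lemma rep_addDysonETransform_le (e x : G) (A B : Finset G) :
    rep (addDysonETransform e (A, B)).1 (addDysonETransform e (A, B)).2 x ≤ rep A B x := by
  simp only [rep_eq_card_filter, addDysonETransform_fst, addDysonETransform_snd]
  set S := {b ∈ B | x - b ∈ A}
  -- a representation `x = (e + b') + b` of the new pair with `x - b ∉ A` is matched with the
  -- old representation `x = (e + b) + b'`, which is not one of the new pair
  have hsub : {b ∈ B ∩ (-e +ᵥ A) | x - b ∈ A ∪ (e +ᵥ B)} ⊆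
      {b ∈ S | e + b ∈ A} ∪ {b ∈ S | e + b ∉ A}.image (fun b => x - e - b) := by
    intro b hb
    simp only [S, mem_filter, mem_inter, mem_union, mem_image, mem_neg_vadd_finset_iff,
      vadd_eq_add] at hb ⊢
    simp only [mem_vadd_finset, vadd_eq_add] at hb
    obtain ⟨⟨hbB, hebA⟩, hxbA | ⟨b', hb'B, hb'⟩⟩ := hb
    · exact .inl ⟨⟨hbB, hxbA⟩, hebA⟩
    · by_cases hxbA : x - b ∈ A
      · exact .inl ⟨⟨hbB, hxbA⟩, hebA⟩
      · obtain rfl : x = e + b' + b := sub_eq_iff_eq_add.mp hb'.symm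
        refine .inr ⟨b', ⟨⟨hb'B, by rwa [add_right_comm, add_sub_cancel_right]⟩, ?_⟩, by abel⟩
        simpa using hxbA
  calc #{b ∈ B ∩ (-e +ᵥ A) | x - b ∈ A ∪ (e +ᵥ B)}
      ≤ #{b ∈ S | e + b ∈ A} + #({b ∈ S | e + b ∉ A}.image (fun b => x - e - b)) :=
        (card_le_card hsub).trans (card_union_le _ _)
    _ ≤ #{b ∈ S | e + b ∈ A} + #{b ∈ S | e + b ∉ A} := by grw [card_image_le]
    _ = #S := card_filter_add_card_filter_not _

theorem card_add_card_le_card_add_add_rep {A B : Finset G} {x : G} (hx : x ∈ A + B) :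
    #A + #B ≤ #(A + B) + rep A B x := by
  induction B using Finset.strongInduction generalizing A with
  | H B ih =>
  obtain ⟨a₀, ha₀, b₀, hb₀, hx₀⟩ := mem_add.mp hx
  by_cases hall : ∀ b ∈ B, x - b ∈ A
  · have hrep : rep A B x = #B := by rw [rep_eq_card_filter, filter_true_of_mem hall]
    have hA : #A ≤ #(A + B) := card_le_card_add_right ⟨b₀, hb₀⟩
    omega
  push Not at hall
  obtain ⟨b₁, hb₁, hb₁A⟩ := hall
  obtain ⟨c, hcA, hc⟩ : ∃ c ∈ A, c + (b₁ - b₀) ∉ A :=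
    exists_add_notMem_of_sub_notMem ha₀ (by rwa [sub_sub_eq_add_sub, hx₀])
  set T := addDysonETransform (c - b₀) (A, B)
  have hb₀T : b₀ ∈ T.2 :=
    mem_inter.mpr ⟨hb₀, mem_neg_vadd_finset_iff.mpr (by simpa using hcA)⟩
  have hb₁T : b₁ ∉ T.2 := fun h =>
    hc (by simpa [add_sub_assoc', sub_add_eq_add_sub] using
      mem_neg_vadd_finset_iff.mp (mem_inter.mp h).2)
  have hTB : T.2 ⊂ B := (ssubset_iff_of_subset inter_subset_left).mpr ⟨b₁, hb₁, hb₁T⟩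
  have hxT : x ∈ T.1 + T.2 := hx₀ ▸ add_mem_add (mem_union_left _ ha₀) hb₀T
  have hind := ih T.2 hTB hxT
  have hcard : #T.1 + #T.2 = #A + #B := addDysonETransform.card _ _
  have hsum : #(T.1 + T.2) ≤ #(A + B) := card_le_card (addDysonETransform.subset _ _)
  have hrep : rep T.1 T.2 x ≤ rep A B x := rep_addDysonETransform_le _ x A B
  omega

theorem prop_mult_result_i_general (A B : Finset G) (k : ℕ)
    (hcard : ((A + B).card : ℤ) ≤ (A.card : ℤ) + B.card - k) :
    ∀ x ∈ A + B, k ≤ rep A B x := by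
  intro x hx
  have := card_add_card_le_card_add_add_rep hx
  omega

theorem prop_mult_result_i (A B : Finset G) (hA : A.Nonempty) (hB : B.Nonempty) (k : ℕ)
    (hk : 1 ≤ k) (hcard : ((A + B).card : ℤ) ≤ (A.card : ℤ) + B.card - k) :
    ∀ x ∈ A + B, k ≤ rep A B x :=
  prop_mult_result_i_general A B k hcard
end
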